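/- For all integers d ≥ 1, ℓ ≥ 1 and n ≥ 1, b_{d,ℓ}(n) = Σ d^k · N((n−2k)/ℓ + k, k), where the sum ranges over all integers k with 0 ≤ k ≤ (n−ℓ)/2 and n − 2k ≡ 0 (mod ℓ). -/

import Mathlib

namespace MultiOp

mutual
inductive Atom (d : ℕ) : Type where
  | star : Atom d
  | op : Fin d → Mon d → Atom d
inductive Mon (d : ℕ) : Type where
  | single : Atom d → Mon d
  | cons : Atom d → Mon d → Mon d
end

mutual
def Atom.deg {d : ℕ} : Atom d → ℕ
  | .star => 1
  | .op _ v => v.deg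
def Mon.deg {d : ℕ} : Mon d → ℕ
  | .single a => a.deg
  | .cons a v => a.deg + v.deg
end

mutual
def Atom.mult {d : ℕ} : Atom d → Fin d → ℕ
  | .star, _ => 0
  | .op i v, j => (if i = j then 1 else 0) + v.mult j
def Mon.mult {d : ℕ} : Mon d → Fin d → ℕ
  | .single a, j => a.mult j
  | .cons a v, j => a.mult j + v.mult j
end

noncomputable def a (d r : ℕ) (s : Fin d → ℕ) : ℕ :=
  Nat.card {v : Mon d // v.deg = r ∧ v.mult = s}

noncomputable def b (d ℓ n : ℕ) : ℕ :=
  Nat.card {v : Mon d // ℓ * v.deg + 2 * (∑ i, v.mult i) = n}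

noncomputable def A (d : ℕ) : MvPowerSeries (Option (Fin d)) ℚ :=
  fun e => (a d (e none) (fun i => e (some i)) : ℚ)

noncomputable def B (d ℓ : ℕ) : PowerSeries ℚ :=
  PowerSeries.mk fun n => (b d ℓ n : ℚ)

def narayana (n k : ℕ) : ℚ := (n.choose k * n.choose (k + 1) : ℚ) / n

variable {d : ℕ}

def Atom.ops (a : Atom d) : ℕ := ∑ i, a.mult i
def Mon.ops (v : Mon d) : ℕ := ∑ i, v.mult i

@[simp] theorem Atom.ops_star : (Atom.star : Atom d).ops = 0 := by
  simp [Atom.ops, Atom.mult]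

@[simp] theorem Atom.ops_op (i : Fin d) (u : Mon d) :
    (Atom.op i u).ops = u.ops + 1 := by
  simp [Atom.ops, Mon.ops, Atom.mult, Finset.sum_add_distrib]
  omega

@[simp] theorem Mon.ops_single (a : Atom d) : (Mon.single a).ops = a.ops := by
  simp [Atom.ops, Mon.ops, Mon.mult]

@[simp] theorem Mon.ops_cons (a : Atom d) (w : Mon d) :
    (Mon.cons a w).ops = a.ops + w.ops := by
  simp [Atom.ops, Mon.ops, Mon.mult, Finset.sum_add_distrib]

@[simp] theorem Mon.deg_single (a : Atom d) : (Mon.single a).deg = a.deg := rfl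
@[simp] theorem Mon.deg_cons (a : Atom d) (w : Mon d) :
    (Mon.cons a w).deg = a.deg + w.deg := rfl
@[simp] theorem Atom.deg_star : (Atom.star : Atom d).deg = 1 := rfl
@[simp] theorem Atom.deg_op (i : Fin d) (u : Mon d) : (Atom.op i u).deg = u.deg := rfl

mutual
theorem Atom.one_le_deg : ∀ a : Atom d, 1 ≤ a.deg
  | .star => le_refl 1
  | .op _ v => Mon.one_le_deg v
theorem Mon.one_le_deg : ∀ v : Mon d, 1 ≤ v.deg
  | .single a => Atom.one_le_deg a
  | .cons a v => le_trans (Atom.one_le_deg a) (Nat.le_add_right _ _)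
end

def degL (vs : List (Mon d)) : ℕ := (vs.map Mon.deg).sum
def opsL (vs : List (Mon d)) : ℕ := (vs.map Mon.ops).sum

@[simp] theorem degL_nil : degL ([] : List (Mon d)) = 0 := rfl
@[simp] theorem degL_cons (v : Mon d) (vs : List (Mon d)) :
    degL (v :: vs) = v.deg + degL vs := rfl
@[simp] theorem opsL_nil : opsL ([] : List (Mon d)) = 0 := rfl
@[simp] theorem opsL_cons (v : Mon d) (vs : List (Mon d)) :
    opsL (v :: vs) = v.ops + opsL vs := rfl

def T (d r k t : ℕ) : Type :=
  {vs : List (Mon d) // vs.length = t ∧ degL vs = r ∧ opsL vs = k}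

theorem degL_eq_zero {vs : List (Mon d)} (h : degL vs = 0) : vs = [] := by
  cases vs with
  | nil => rfl
  | cons v vs =>
    exfalso
    have := Mon.one_le_deg v
    simp [degL] at h
    omega

theorem length_le_degL (vs : List (Mon d)) : vs.length ≤ degL vs := by
  induction vs with
  | nil => simp
  | cons v vs ih =>
    have := Mon.one_le_deg v
    simp
    omega


def E1 (r k t : ℕ) :
    T d (r+1) (k+1) (t+1) ≃
      (T d r (k+1) t ⊕ T d r (k+1) (t+1) ⊕
        (Fin d × T d (r+1) k (t+1)) ⊕ (Fin d × T d (r+1) k (t+2))) where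
  toFun := fun x =>
    match x with
    | ⟨[], h⟩ => absurd h.1 (by simp)
    | ⟨.single .star :: rest, h⟩ =>
        .inl ⟨rest, by obtain ⟨h1, h2, h3⟩ := h; simp at h1 h2 h3; omega⟩
    | ⟨.cons .star w :: rest, h⟩ =>
        .inr (.inl ⟨w :: rest, by obtain ⟨h1, h2, h3⟩ := h; simp at h1 h2 h3 ⊢; omega⟩)
    | ⟨.single (.op i u) :: rest, h⟩ =>
        .inr (.inr (.inl (i, ⟨u :: rest, by
          obtain ⟨h1, h2, h3⟩ := h; simp at h1 h2 h3 ⊢; omega⟩)))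
    | ⟨.cons (.op i u) w :: rest, h⟩ =>
        .inr (.inr (.inr (i, ⟨u :: w :: rest, by
          obtain ⟨h1, h2, h3⟩ := h; simp at h1 h2 h3 ⊢; omega⟩)))
  invFun := fun x =>
    match x with
    | .inl ⟨rest, h⟩ =>
        ⟨.single .star :: rest, by obtain ⟨h1, h2, h3⟩ := h; simp; omega⟩
    | .inr (.inl ⟨[], h⟩) => absurd h.1 (by simp)
    | .inr (.inl ⟨w :: rest, h⟩) =>
        ⟨.cons .star w :: rest, by obtain ⟨h1, h2, h3⟩ := h; simp at h1 h2 h3 ⊢; omega⟩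
    | .inr (.inr (.inl (i, ⟨[], h⟩))) => absurd h.1 (by simp)
    | .inr (.inr (.inl (i, ⟨u :: rest, h⟩))) =>
        ⟨.single (.op i u) :: rest, by obtain ⟨h1, h2, h3⟩ := h; simp at h1 h2 h3 ⊢; omega⟩
    | .inr (.inr (.inr (i, ⟨[], h⟩))) => absurd h.1 (by simp)
    | .inr (.inr (.inr (i, ⟨[u], h⟩))) => absurd h.1 (by simp)
    | .inr (.inr (.inr (i, ⟨u :: w :: rest, h⟩))) =>
        ⟨.cons (.op i u) w :: rest, by obtain ⟨h1, h2, h3⟩ := h; simp at h1 h2 h3 ⊢; omega⟩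
  left_inv := by
    rintro ⟨_ | ⟨(⟨a⟩ | ⟨a, w⟩), rest⟩, h⟩
    · exact absurd h.1 (by simp)
    · cases a <;> rfl
    · cases a <;> rfl
  right_inv := by
    rintro (⟨vs, h⟩ | ⟨vs, h⟩ | ⟨i, vs, h⟩ | ⟨i, vs, h⟩) <;>
      rcases vs with _ | ⟨u, _ | ⟨w, rest⟩⟩ <;>
      first
        | rfl
        | (exfalso; obtain ⟨h1, -, -⟩ := h; simp at h1)
        | (exfalso; obtain ⟨h1, -, -⟩ := h; simp at h1; omega)

def E0 (r t : ℕ) :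
    T d (r+1) 0 (t+1) ≃ (T d r 0 t ⊕ T d r 0 (t+1)) where
  toFun := fun x =>
    match x with
    | ⟨[], h⟩ => absurd h.1 (by simp)
    | ⟨.single .star :: rest, h⟩ =>
        .inl ⟨rest, by obtain ⟨h1, h2, h3⟩ := h; simp at h1 h2 h3; omega⟩
    | ⟨.cons .star w :: rest, h⟩ =>
        .inr ⟨w :: rest, by obtain ⟨h1, h2, h3⟩ := h; simp at h1 h2 h3 ⊢; omega⟩
    | ⟨.single (.op i u) :: rest, h⟩ =>
        absurd h.2.2 (by simp)
    | ⟨.cons (.op i u) w :: rest, h⟩ =>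
        absurd h.2.2 (by simp)
  invFun := fun x =>
    match x with
    | .inl ⟨rest, h⟩ =>
        ⟨.single .star :: rest, by obtain ⟨h1, h2, h3⟩ := h; simp; omega⟩
    | .inr ⟨[], h⟩ => absurd h.1 (by simp)
    | .inr ⟨w :: rest, h⟩ =>
        ⟨.cons .star w :: rest, by obtain ⟨h1, h2, h3⟩ := h; simp at h1 h2 h3 ⊢; omega⟩
  left_inv := by
    rintro ⟨_ | ⟨(⟨a⟩ | ⟨a, w⟩), rest⟩, h⟩
    · exact absurd h.1 (by simp)
    · cases a
      · rfl
      · exfalso; obtain ⟨-, -, h3⟩ := h; simp at h3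
    · cases a
      · rfl
      · exfalso; obtain ⟨-, -, h3⟩ := h; simp at h3
  right_inv := by
    rintro (⟨vs, h⟩ | ⟨vs, h⟩) <;>
      rcases vs with _ | ⟨u, rest⟩ <;>
      first
        | rfl
        | (exfalso; obtain ⟨h1, -, -⟩ := h; simp at h1)


theorem T0_subsingleton (k t : ℕ) : Subsingleton (T d 0 k t) :=
  ⟨fun x y => Subtype.ext (by rw [degL_eq_zero x.2.2.1, degL_eq_zero y.2.2.1])⟩

theorem T_t0_empty (r k : ℕ) : IsEmpty (T d (r+1) k 0) :=
  ⟨fun x => by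
    obtain ⟨vs, h1, h2, h3⟩ := x
    rw [List.length_eq_zero_iff] at h1
    subst h1
    simp at h2⟩

theorem cardT0 (k t : ℕ) :
    Nat.card (T d 0 k t) = if k = 0 ∧ t = 0 then 1 else 0 := by
  by_cases h : k = 0 ∧ t = 0
  · rw [if_pos h]
    rw [Nat.card_eq_one_iff_unique]
    exact ⟨T0_subsingleton k t, ⟨⟨[], by simp [h.1, h.2]⟩⟩⟩
  · rw [if_neg h]
    have : IsEmpty (T d 0 k t) := ⟨fun x => by
      obtain ⟨vs, h1, h2, h3⟩ := x
      have e := degL_eq_zero h2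
      subst e
      simp at h1 h3
      exact h ⟨h3.symm, h1.symm⟩⟩
    exact Nat.card_of_isEmpty

theorem finT (r k t : ℕ) : Finite (T d r k t) := by
  induction r generalizing k t with
  | zero => have := T0_subsingleton (d := d) k t; exact Finite.of_subsingleton
  | succ r ihr =>
    induction k generalizing t with
    | zero =>
      cases t with
      | zero => have := T_t0_empty (d := d) r 0; exact Finite.of_subsingleton
      | succ t =>
        have f1 := ihr 0 t
        have f2 := ihr 0 (t+1)
        exact Finite.of_equiv _ (E0 r t).symm
    | succ k ihk =>
      cases t with
      | zero => have := T_t0_empty (d := d) r (k+1); exact Finite.of_subsingleton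
      | succ t =>
        have f1 := ihr (k+1) t
        have f2 := ihr (k+1) (t+1)
        have f3 := ihk (t+1)
        have f4 := ihk (t+2)
        exact Finite.of_equiv _ (E1 r k t).symm


def Gf (d r k t : ℕ) : ℚ :=
  if t ≤ r then (d : ℚ)^k * t * ((r+k-1).choose k) * ((r+k).choose (r-t)) / r else 0
def Hf (d r k t : ℕ) : ℚ :=
  if r = 0 then (if k = 0 ∧ t = 0 then 1 else 0) else Gf d r k t

theorem Hf_succ (r k t : ℕ) (h : t ≤ r + 1) :
    Hf d (r+1) k t
      = (d:ℚ)^k * t * ((r+k).choose k) * ((r+1+k).choose (r+1-t)) / (r+1) := by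
  rw [Hf, if_neg (Nat.succ_ne_zero r), Gf, if_pos h, show r+1+k-1 = r+k by omega]
  push_cast
  ring

theorem Hf_gt (r k t : ℕ) (h : r < t) : Hf d r k t = 0 := by
  rcases r with _ | r
  · rw [Hf, if_pos rfl, if_neg]; rintro ⟨-, rfl⟩; omega
  · rw [Hf, if_neg (Nat.succ_ne_zero r), Gf, if_neg (by omega)]

theorem Hf_zero' (k t : ℕ) : Hf d 0 k t = if k = 0 ∧ t = 0 then 1 else 0 := by
  rw [Hf, if_pos rfl]

theorem Hrec0 (r t : ℕ) : Hf d (r+1) 0 (t+1) = Hf d r 0 t + Hf d r 0 (t+1) := by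
  rcases Nat.lt_trichotomy t r with h | h | h
  · obtain ⟨u, rfl⟩ : ∃ u, r = t + u + 1 := ⟨r - t - 1, by omega⟩
    rw [show t+u+1+1 = (t+u+1)+1 from rfl, Hf_succ _ _ _ (by omega),
      show t+u+1 = (t+u)+1 from rfl, Hf_succ _ _ _ (by omega),
      Hf_succ _ _ _ (by omega)]
    rw [show t+u+1+0 = t+u+1 by omega, show t+u+0 = t+u by omega,
      show t+u+1+1-(t+1) = u+1 by omega, show t+u+1-t = u+1 by omega,
      show t+u+1-(t+1) = u by omega]
    have e1 : ((t+u+2).choose (u+1) : ℚ)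
        = (t+u+1).choose u + (t+u+1).choose (u+1) := by
      rw [show t+u+2 = (t+u+1)+1 from rfl, Nat.choose_succ_succ]; push_cast; ring
    have e2 : ((t+u+1).choose (u+1) * (u+1) : ℚ) = (t+u+1).choose u * (t+1) := by
      have h2 := Nat.choose_succ_right_eq (t+u+1) u
      rw [show t+u+1-u = t+1 by omega] at h2
      exact_mod_cast congrArg (Nat.cast : ℕ → ℚ) h2
    have hz1 : ((t:ℚ)+u+1) ≠ 0 := by positivity
    have hz2 : ((t:ℚ)+u+2) ≠ 0 := by positivity
    push_cast
    field_simp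
    simp only [Nat.choose_zero_right, Nat.cast_one, mul_one, add_zero, show t+u+1+1 = t+u+2 from rfl]
    linear_combination (((t:ℚ)+1)*((t:ℚ)+u+1)) * e1 + e2
  · subst h
    have hT1 : Hf d t 0 t = 1 := by
      rcases t with _ | t
      · simp [Hf_zero']
      · rw [Hf_succ _ _ _ le_rfl, show t+1-(t+1) = 0 by omega]
        have hz : ((t:ℚ)+1) ≠ 0 := by positivity
        simp
        field_simp
        exact hz
    rw [Hf_succ t 0 (t+1) le_rfl, hT1, Hf_gt t 0 (t+1) (by omega),
      show t+1-(t+1) = 0 by omega]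
    have hz : ((t:ℚ)+1) ≠ 0 := by positivity
    simp only [Nat.choose_zero_right, Nat.choose_self, Nat.cast_one, mul_one, add_zero]
    push_cast
    field_simp
  · rw [Hf_gt (r+1) 0 (t+1) (by omega), Hf_gt r 0 t (by omega), Hf_gt r 0 (t+1) (by omega)]
    norm_num

theorem Hrec1 (r k t : ℕ) :
    Hf d (r+1) (k+1) (t+1) =
      Hf d r (k+1) t + Hf d r (k+1) (t+1)
        + d * Hf d (r+1) k (t+1) + d * Hf d (r+1) k (t+2) := by
  rcases Nat.lt_trichotomy t r with h | h | h
  · -- t < r ; r = t+u+1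
    obtain ⟨u, rfl⟩ : ∃ u, r = t + u + 1 := ⟨r - t - 1, by omega⟩
    rw [show t+u+1+1 = (t+u+1)+1 from rfl, Hf_succ _ _ _ (by omega),
      show t+u+1 = (t+u)+1 from rfl, Hf_succ _ _ _ (by omega),
      Hf_succ _ _ _ (by omega), Hf_succ (t+u+1) k (t+1) (by omega),
      Hf_succ (t+u+1) k (t+2) (by omega)]
    rw [show t+u+1+(k+1) = k+t+u+2 by omega,
      show t+u+1+1+(k+1) = k+t+u+3 by omega,
      show t+u+1+1-(t+1) = u+1 by omega,
      show t+u+(k+1) = k+t+u+1 by omega,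
      show t+u+1-t = u+1 by omega,
      show t+u+1-(t+1) = u by omega,
      show t+u+1+k = k+t+u+1 by omega,
      show t+u+1+1+k = k+t+u+2 by omega,
      show t+u+1+1-(t+2) = u by omega]
    have e1 : ((k+t+u+2).choose (k+1) : ℚ)
        = (k+t+u+1).choose k + (k+t+u+1).choose (k+1) := by
      rw [show k+t+u+2 = (k+t+u+1)+1 from rfl, Nat.choose_succ_succ]; push_cast; ring
    have e2 : ((k+t+u+3).choose (u+1) : ℚ)
        = (k+t+u+2).choose u + (k+t+u+2).choose (u+1) := by
      rw [show k+t+u+3 = (k+t+u+2)+1 from rfl, Nat.choose_succ_succ]; push_cast; ring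
    have e3 : ((k+t+u+1).choose (k+1) * (k+1) : ℚ)
        = (k+t+u+1).choose k * (t+u+1) := by
      have h3 := Nat.choose_succ_right_eq (k+t+u+1) k
      rw [show k+t+u+1-k = t+u+1 by omega] at h3
      exact_mod_cast congrArg (Nat.cast : ℕ → ℚ) h3
    have e4 : ((k+t+u+2).choose (u+1) * (u+1) : ℚ)
        = (k+t+u+2).choose u * (k+t+2) := by
      have h4 := Nat.choose_succ_right_eq (k+t+u+2) u
      rw [show k+t+u+2-u = k+t+2 by omega] at h4
      exact_mod_cast congrArg (Nat.cast : ℕ → ℚ) h4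
    have key : ((t:ℚ)+1) * ((t:ℚ)+(u:ℚ)+1)
          * ((k+t+u+2).choose (k+1) : ℚ) * ((k+t+u+3).choose (u+1) : ℚ)
        = (t:ℚ) * ((t:ℚ)+u+2) * ((k+t+u+1).choose (k+1) : ℚ) * ((k+t+u+2).choose (u+1) : ℚ)
          + ((t:ℚ)+1) * ((t:ℚ)+u+2) * ((k+t+u+1).choose (k+1) : ℚ) * ((k+t+u+2).choose u : ℚ)
          + ((t:ℚ)+1) * ((t:ℚ)+u+1) * ((k+t+u+1).choose k : ℚ) * ((k+t+u+2).choose (u+1) : ℚ)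
          + ((t:ℚ)+2) * ((t:ℚ)+u+1) * ((k+t+u+1).choose k : ℚ) * ((k+t+u+2).choose u : ℚ) := by
      linear_combination
        (((t:ℚ)+1)*((t:ℚ)+u+1) * ((k+t+u+3).choose (u+1) : ℚ)) * e1
        + (((t:ℚ)+1)*((t:ℚ)+u+1) * (((k+t+u+1).choose (k+1) : ℚ) + ((k+t+u+1).choose k : ℚ))) * e2
        + (((k+t+u+2).choose u : ℚ)) * e3
        + (((k+t+u+1).choose (k+1) : ℚ)) * e4
    have hz1 : ((t:ℚ)+u+1) ≠ 0 := by positivity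
    have hz2 : ((t:ℚ)+u+2) ≠ 0 := by positivity
    push_cast
    field_simp
    linear_combination ((d:ℚ)^(k+1)) * key
  · -- t = r
    subst h
    have hT1 : Hf d t (k+1) t = (d:ℚ)^(k+1) * ((t+k).choose (k+1) : ℚ) := by
      rcases t with _ | t
      · rw [Hf_zero', if_neg (by omega)]
        rw [show (0:ℕ)+k = k from by omega, Nat.choose_succ_self]
        simp
      · rw [Hf_succ t (k+1) (t+1) le_rfl, show t+1-(t+1) = 0 by omega,
          show t+(k+1) = t+1+k by omega]
        have hz : ((t:ℚ)+1) ≠ 0 := by positivity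
        simp only [Nat.choose_zero_right, Nat.cast_one, mul_one]
        push_cast
        field_simp
    rw [Hf_succ t (k+1) (t+1) le_rfl, hT1, Hf_gt t (k+1) (t+1) (by omega),
      Hf_succ t k (t+1) le_rfl, Hf_gt (t+1) k (t+2) (by omega),
      show t+1-(t+1) = 0 by omega, show t+(k+1) = t+k+1 by omega]
    have e1 : ((t+k+1).choose (k+1) : ℚ)
        = (t+k).choose k + (t+k).choose (k+1) := by
      rw [show t+k+1 = (t+k)+1 from rfl, Nat.choose_succ_succ]; push_cast; ring
    have hz : ((t:ℚ)+1) ≠ 0 := by positivity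
    simp only [Nat.choose_zero_right, Nat.cast_one, mul_one]
    push_cast
    field_simp
    linear_combination ((d:ℚ)^(k+1)) * e1
  · rw [Hf_gt (r+1) (k+1) (t+1) (by omega), Hf_gt r (k+1) t (by omega),
      Hf_gt r (k+1) (t+1) (by omega), Hf_gt (r+1) k (t+1) (by omega),
      Hf_gt (r+1) k (t+2) (by omega)]
    norm_num

theorem Ht0 (r k : ℕ) : Hf d (r+1) k 0 = 0 := by
  simp [Hf, Gf]

theorem cardT (r k t : ℕ) : (Nat.card (T d r k t) : ℚ) = Hf d r k t := by
  induction r generalizing k t with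
  | zero =>
    rw [cardT0, Hf]
    simp only [if_pos rfl]
    split <;> simp
  | succ r ihr =>
    induction k generalizing t with
    | zero =>
      cases t with
      | zero =>
        have := T_t0_empty (d := d) r 0
        rw [Nat.card_of_isEmpty, Ht0]
        simp
      | succ t =>
        have f1 := finT (d := d) r 0 t
        have f2 := finT (d := d) r 0 (t+1)
        rw [Nat.card_congr (E0 r t), Nat.card_sum, Hrec0]
        push_cast
        rw [ihr 0 t, ihr 0 (t+1)]
    | succ k ihk =>
      cases t with
      | zero =>
        have := T_t0_empty (d := d) r (k+1)
        rw [Nat.card_of_isEmpty, Ht0]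
        simp
      | succ t =>
        have f1 := finT (d := d) r (k+1) t
        have f2 := finT (d := d) r (k+1) (t+1)
        have f3 := finT (d := d) (r+1) k (t+1)
        have f4 := finT (d := d) (r+1) k (t+2)
        rw [Nat.card_congr (E1 r k t), Nat.card_sum, Nat.card_sum, Nat.card_sum,
          Nat.card_prod, Nat.card_prod, Nat.card_eq_fintype_card (α := Fin d), Fintype.card_fin,
          Hrec1]
        push_cast
        rw [ihr (k+1) t, ihr (k+1) (t+1), ihk (t+1), ihk (t+2)]
        ring


instance (r k t : ℕ) : Finite (T d r k t) := finT r k t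

def FibEquiv (r k : ℕ) : {v : Mon d // v.deg = r ∧ v.ops = k} ≃ T d r k 1 where
  toFun := fun x => ⟨[x.1], by simp [x.2.1, x.2.2]⟩
  invFun := fun x =>
    match x with
    | ⟨[], h⟩ => absurd h.1 (by simp)
    | ⟨[v], h⟩ => ⟨v, by obtain ⟨h1, h2, h3⟩ := h; simp at h2 h3; exact ⟨h2, h3⟩⟩
    | ⟨v :: w :: rest, h⟩ => absurd h.1 (by simp)
  left_inv := by rintro ⟨v, h⟩; rfl
  right_inv := by
    rintro ⟨vs, h⟩
    rcases vs with _ | ⟨v, _ | ⟨w, rest⟩⟩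
    · exact absurd h.1 (by simp)
    · rfl
    · exact absurd h.1 (by simp)

instance (r k : ℕ) : Finite {v : Mon d // v.deg = r ∧ v.ops = k} :=
  Finite.of_equiv _ (FibEquiv r k).symm

theorem card_fib (r k : ℕ) :
    (Nat.card {v : Mon d // v.deg = r ∧ v.ops = k} : ℚ) = Hf d r k 1 := by
  rw [Nat.card_congr (FibEquiv r k), cardT]

theorem narG (r k : ℕ) :
    Hf d (r+1) k 1 = (d:ℚ)^k * narayana (r+1+k) k := by
  rw [Hf_succ r k 1 (by omega), show r+1-1 = r by omega, narayana]
  have esymm : ((r+1+k).choose r : ℚ) = (r+1+k).choose (k+1) := by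
    rw [← Nat.choose_symm (show k+1 ≤ r+1+k by omega),
      show r+1+k-(k+1) = r by omega]
  have emul : ((r+k).choose k * (r+1+k) : ℚ) = (r+1+k).choose k * (r+1) := by
    have h1 := Nat.choose_mul_succ_eq (r+k) k
    rw [show r+k+1-k = r+1 by omega, show r+k+1 = r+1+k by omega] at h1
    exact_mod_cast congrArg (Nat.cast : ℕ → ℚ) h1
  have hz1 : ((r:ℚ)+1) ≠ 0 := by positivity
  have hz2 : ((r:ℚ)+1+k) ≠ 0 := by positivity
  rw [esymm]
  push_cast
  field_simp
  linear_combination ((d:ℚ)^k * ((r+1+k).choose (k+1) : ℚ)) * emul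

theorem nat_card_sigma {ι : Type} [Fintype ι] (f : ι → Type) [∀ i, Finite (f i)] :
    Nat.card ((i : ι) × f i) = ∑ i, Nat.card (f i) := by
  letI : ∀ i, Fintype (f i) := fun i => Fintype.ofFinite _
  simp [Nat.card_eq_fintype_card, Fintype.card_sigma]

def KS (ℓ n : ℕ) : Finset ℕ :=
  (Finset.range ((n - ℓ) / 2 + 1)).filter (fun k => ℓ ∣ (n - 2 * k))

def Fib (d ℓ n k : ℕ) : Type :=
  {v : Mon d // v.deg = (n - 2 * k) / ℓ ∧ v.ops = k}

instance (ℓ n k : ℕ) : Finite (Fib d ℓ n k) :=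
  Finite.of_equiv _ (FibEquiv ((n - 2 * k) / ℓ) k).symm

theorem card_Fib (ℓ n k : ℕ) :
    (Nat.card (Fib d ℓ n k) : ℚ) = Hf d ((n - 2 * k) / ℓ) k 1 :=
  card_fib _ _

theorem KS_bounds {ℓ n k : ℕ} (hl : 1 ≤ ℓ) (hn : 1 ≤ n) (hk : k ∈ KS ℓ n) :
    ℓ ≤ n - 2 * k ∧ 2 * k ≤ n - ℓ := by
  rw [KS, Finset.mem_filter, Finset.mem_range] at hk
  obtain ⟨hk1, hk2⟩ := hk
  have hq : (n - ℓ) / 2 * 2 ≤ n - ℓ := Nat.div_mul_le_self _ _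
  have h2 : 2 * k ≤ n - ℓ := by omega
  have hln : ℓ ≤ n := by
    by_contra hcon
    have hk0 : k = 0 := by omega
    have hdvdn : ℓ ∣ n := by rw [hk0] at hk2; simpa using hk2
    have := Nat.le_of_dvd (show 0 < n by omega) hdvdn
    omega
  exact ⟨by omega, h2⟩

theorem mem_KS_ops {ℓ n : ℕ} (hl : 1 ≤ ℓ) (v : Mon d)
    (hv : ℓ * v.deg + 2 * v.ops = n) : v.ops ∈ KS ℓ n := by
  have hdeg := Mon.one_le_deg v
  have hld : ℓ ≤ ℓ * v.deg := Nat.le_mul_of_pos_right ℓ (by omega)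
  have hsub : n - 2 * v.ops = ℓ * v.deg := by omega
  rw [KS, Finset.mem_filter, Finset.mem_range]
  refine ⟨?_, ⟨v.deg, hsub⟩⟩
  have h1 : v.ops * 2 ≤ n - ℓ := by omega
  have := (Nat.le_div_iff_mul_le (show 0 < 2 by omega)).2 h1
  omega

theorem KS_deg {ℓ n : ℕ} (hl : 1 ≤ ℓ) (v : Mon d)
    (hv : ℓ * v.deg + 2 * v.ops = n) : v.deg = (n - 2 * v.ops) / ℓ := by
  have hsub : n - 2 * v.ops = ℓ * v.deg := by omega
  rw [hsub, Nat.mul_div_cancel_left _ (show 0 < ℓ by omega)]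

theorem KS_inv {ℓ n k : ℕ} (hl : 1 ≤ ℓ) (hn : 1 ≤ n) (hk : k ∈ KS ℓ n) (v : Mon d)
    (hdeg : v.deg = (n - 2 * k) / ℓ) (hops : v.ops = k) :
    ℓ * v.deg + 2 * v.ops = n := by
  obtain ⟨h1, h2⟩ := KS_bounds hl hn hk
  have hdvd : ℓ ∣ (n - 2 * k) := by
    rw [KS, Finset.mem_filter] at hk; exact hk.2
  have hmul : ℓ * ((n - 2 * k) / ℓ) = n - 2 * k := Nat.mul_div_cancel' hdvd
  rw [hdeg, hops, hmul]
  omega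

def bEquiv (d ℓ n : ℕ) (hl : 1 ≤ ℓ) (hn : 1 ≤ n) :
    {v : Mon d // ℓ * v.deg + 2 * (∑ i, v.mult i) = n}
      ≃ (k : {x // x ∈ KS ℓ n}) × Fib d ℓ n k.1 where
  toFun x := ⟨⟨x.1.ops, mem_KS_ops hl x.1 x.2⟩, ⟨x.1, KS_deg hl x.1 x.2, rfl⟩⟩
  invFun y := ⟨y.2.1, KS_inv hl hn y.1.2 y.2.1 y.2.2.1 y.2.2.2⟩
  left_inv x := rfl
  right_inv := by
    rintro ⟨⟨k, hk⟩, v, hdeg, hops⟩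
    have hops' : v.ops = k := hops
    subst hops'
    rfl

/-- For `d, ℓ, n ≥ 1`,
`b_{d,ℓ}(n) = Σ d^k · N((n−2k)/ℓ + k, k)`, summed over all `k` with
`0 ≤ k ≤ (n−ℓ)/2` and `n − 2k ≡ 0 (mod ℓ)`. -/
theorem b_eq_sum_narayana (d ℓ n : ℕ) (hd : 1 ≤ d) (hl : 1 ≤ ℓ) (hn : 1 ≤ n) :
    (b d ℓ n : ℚ)
      = ∑ k ∈ (Finset.range ((n - ℓ) / 2 + 1)).filter (fun k => ℓ ∣ (n - 2 * k)),
          (d : ℚ) ^ k * narayana ((n - 2 * k) / ℓ + k) k := by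
  classical
  have hb : (b d ℓ n : ℚ) = ∑ k ∈ KS ℓ n, (Nat.card (Fib d ℓ n k) : ℚ) := by
    have h1 : b d ℓ n = Nat.card ((k : {x // x ∈ KS ℓ n}) × Fib d ℓ n k.1) :=
      Nat.card_congr (bEquiv d ℓ n hl hn)
    rw [h1, nat_card_sigma]
    push_cast
    exact Finset.sum_coe_sort (KS ℓ n) (fun k => (Nat.card (Fib d ℓ n k) : ℚ))
  have hKS : (Finset.range ((n - ℓ) / 2 + 1)).filter (fun k => ℓ ∣ (n - 2 * k))
      = KS ℓ n := rfl
  rw [hKS, hb]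
  refine Finset.sum_congr rfl ?_
  intro k hk
  obtain ⟨h1, h2⟩ := KS_bounds hl hn hk
  have hr1 : 1 ≤ (n - 2 * k) / ℓ := (Nat.one_le_div_iff (by omega)).2 h1
  obtain ⟨r, hr⟩ : ∃ r, (n - 2 * k) / ℓ = r + 1 := ⟨(n - 2 * k) / ℓ - 1, by omega⟩
  rw [card_Fib, hr, narG]

end MultiOp
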